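/- Let Ω ⊂ ℝ² be open and let u : Ω → ℝ be continuous with the local median value property. Then u is a viscosity supersolution of −Δ₁u = 0: whenever x₀ ∈ Ω and φ ∈ C²(Ω) satisfy φ(x₀) = u(x₀), φ(x) < u(x) for x ≠ x₀, and Dφ(x₀) ≠ 0, then −Δ₁φ(x₀) ≥ 0. -/

import Mathlib

open MeasureTheory Set Metric Real Filter Topology

/-- `m` is a median of `u` over the circle `∂B(x,r)` with respect to arclength measure,
parametrized by `θ ↦ x + r e^{iθ}`. -/
def IsCircleMedian (x : ℂ) (r : ℝ) (u : ℂ → ℝ) (m : ℝ) : Prop :=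
  volume (Ioc (0:ℝ) (2*π)) / 2 ≤ volume {θ ∈ Ioc (0:ℝ) (2*π) | m ≤ u (circleMap x r θ)} ∧
  volume (Ioc (0:ℝ) (2*π)) / 2 ≤ volume {θ ∈ Ioc (0:ℝ) (2*π) | u (circleMap x r θ) ≤ m}

/-- `u` has the local median value property on `Ω`. -/
def HasLMVP (Ω : Set ℂ) (u : ℂ → ℝ) : Prop :=
  ∃ R : ℂ → ℝ, ContinuousOn R Ω ∧
    (∀ x ∈ Ω, 0 < R x ∧ R x ≤ Metric.infDist x Ωᶜ) ∧
    (∀ x ∈ Ω, ∀ r : ℝ, 0 < r → r ≤ R x → IsCircleMedian x r u (u x))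

/-! Suppose `q := D²φ(x₀)(v,v) > 0`; replacing `v` by `-v` we may take `c := Dφ(x₀)(iv) > 0`.
On the circle `x₀ + r v e^{iβ}` Taylor's formula gives
`φ ≥ φ(x₀) + r (c sin β + r G β) - ε r²` with `G β = ½ D²φ(x₀)(v e^{iβ}, v e^{iβ})`, and `G` is
close to `q / 2` near `β = 0` and `β = π`. Hence for small `r` we have `φ > φ(x₀)` on an arc
`-k r < β < π + k r`, so `{φ ≤ φ(x₀)}` fills at most `π - 2 k r` of the circle. But `φ ≤ u` and
`u(x₀)` is a median of `u` on the circle, so this set fills at least half of it. -/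

theorem isLittleO_taylor_two {E F : Type*} [NormedAddCommGroup E] [NormedSpace ℝ E]
    [NormedAddCommGroup F] [NormedSpace ℝ F] {f : E → F} {x : E} (hf : Differentiable ℝ f)
    (hf' : DifferentiableAt ℝ (fderiv ℝ f) x) :
    (fun w => f (x + w) - f x - fderiv ℝ f x w - (2 : ℝ)⁻¹ • fderiv ℝ (fderiv ℝ f) x w w)
      =o[𝓝 0] fun w => ‖w‖ ^ 2 := by
  set B := fderiv ℝ (fderiv ℝ f) x
  refine Asymptotics.isLittleO_iff.2 fun ε hε => ?_
  obtain ⟨ρ, hρ, hball⟩ := Metric.eventually_nhds_iff_ball.1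
    ((hasFDerivAt_iff_isLittleO_nhds_zero.1 hf'.hasFDerivAt).bound hε)
  filter_upwards [Metric.ball_mem_nhds 0 hρ] with w hw
  set g : ℝ → F := fun t => f (x + t • w) - t • fderiv ℝ f x w - (t ^ 2 / 2) • B w w
  have hg : ∀ t, HasDerivAt g ((fderiv ℝ f (x + t • w) - fderiv ℝ f x - B (t • w)) w) t := by
    intro t
    have hline : HasDerivAt (fun s : ℝ => x + s • w) w t := by
      simpa using ((hasDerivAt_id t).smul_const w).const_add x
    have hsq : HasDerivAt (fun s : ℝ => s ^ 2 / 2) t t := by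
      simpa using (hasDerivAt_pow 2 t).div_const 2
    refine ((((hf _).hasFDerivAt.comp_hasDerivAt t hline).sub
      ((hasDerivAt_id t).smul_const (fderiv ℝ f x w))).sub (hsq.smul_const (B w w))).congr_deriv ?_
    simp
  have hbound : ∀ t ∈ Ico (0 : ℝ) 1,
      ‖(fderiv ℝ f (x + t • w) - fderiv ℝ f x - B (t • w)) w‖ ≤ ε * ‖w‖ ^ 2 := by
    intro t ht
    have htw : ‖t • w‖ ≤ ‖w‖ := by
      rw [norm_smul, Real.norm_of_nonneg ht.1]
      exact mul_le_of_le_one_left (norm_nonneg _) ht.2.le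
    have hmem : t • w ∈ ball (0 : E) ρ :=
      mem_ball_zero_iff.2 (htw.trans_lt (mem_ball_zero_iff.1 hw))
    calc _ ≤ ‖fderiv ℝ f (x + t • w) - fderiv ℝ f x - B (t • w)‖ * ‖w‖ :=
          ContinuousLinearMap.le_opNorm _ _
      _ ≤ ε * ‖t • w‖ * ‖w‖ := by gcongr; exact hball _ hmem
      _ ≤ ε * ‖w‖ * ‖w‖ := by gcongr
      _ = ε * ‖w‖ ^ 2 := by ring
  have := norm_image_sub_le_of_norm_deriv_le_segment'
    (fun t _ => (hg t).hasDerivWithinAt) hbound 1 (right_mem_Icc.2 zero_le_one)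
  have hg10 : g 1 - g 0 = f (x + w) - f x - fderiv ℝ f x w - (2 : ℝ)⁻¹ • B w w := by
    simp only [g, one_smul, zero_smul, add_zero]
    module
  rw [Real.norm_of_nonneg (by positivity), ← hg10]
  simpa using this

theorem ContDiff.eventually_taylor_two_lower_bound {E : Type*} [NormedAddCommGroup E]
    [NormedSpace ℝ E] {f : E → ℝ} (hf : ContDiff ℝ 2 f) (x : E) {ε : ℝ} (hε : 0 < ε) :
    ∀ᶠ r in 𝓝[>] 0, ∀ z : E, ‖z‖ = 1 →
      f x + r * fderiv ℝ f x z + r ^ 2 / 2 * fderiv ℝ (fderiv ℝ f) x z z - ε * r ^ 2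
        ≤ f (x + r • z) := by
  obtain ⟨ρ, hρ, htaylor⟩ := Metric.eventually_nhds_iff_ball.1 <|
    (isLittleO_taylor_two (hf.differentiable two_ne_zero)
      ((hf.fderiv_right le_rfl).differentiable one_ne_zero x)).bound hε
  filter_upwards [self_mem_nhdsWithin, nhdsWithin_le_nhds (gt_mem_nhds hρ)]
    with r (hr : 0 < r) hrρ z hz
  have hrz : ‖r • z‖ = r := by rw [norm_smul, hz, mul_one, Real.norm_of_nonneg hr.le]
  have := htaylor (r • z) (mem_ball_zero_iff.2 (hrz.trans_lt hrρ))
  rw [hrz, Real.norm_of_nonneg (sq_nonneg r), Real.norm_eq_abs] at this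
  simp only [map_smul, smul_apply, smul_eq_mul] at this
  linarith [(abs_le.1 this).1]

theorem volume_Ioc_inter_eq_of_periodic {A : Set ℝ} {T : ℝ} [Fact (0 < T)]
    (hA : MeasurableSet A) (hper : Function.Periodic (· ∈ A) T) (s t : ℝ) :
    volume (Ioc s (s + T) ∩ A) = volume (Ioc t (t + T) ∩ A) := by
  have hpre : ((↑) : ℝ → AddCircle T) ⁻¹' ((↑) '' A) = A := by
    ext θ
    simp only [mem_preimage, mem_image, QuotientAddGroup.eq_iff_sub_mem,
      AddSubgroup.mem_zmultiples_iff]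
    constructor
    · rintro ⟨a, ha, k, hk⟩
      have := (hper.zsmul k) θ
      rw [hk, add_sub_cancel] at this
      exact this ▸ ha
    · exact fun hθ => ⟨θ, hθ, 0, by simp⟩
  have hU : MeasurableSet (((↑) : ℝ → AddCircle T) '' A) := by
    change MeasurableSet (((↑) : ℝ → AddCircle T) ⁻¹' _)
    rwa [hpre]
  rw [inter_comm, ← hpre, ← AddCircle.add_projection_respects_measure T s hU, inter_comm,
    ← AddCircle.add_projection_respects_measure T t hU]

theorem volume_Ioc_inter_le_of_disjoint_Ioo {A : Set ℝ} {T a b : ℝ} [Fact (0 < T)]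
    (hA : MeasurableSet A) (hper : Function.Periodic (· ∈ A) T)
    (hdisj : Disjoint (Ioo a b) A) :
    volume (Ioc 0 T ∩ A) ≤ ENNReal.ofReal (T - (b - a)) := by
  have hsub : Ioc a (a + T) ∩ A ⊆ Icc b (a + T) := fun θ ⟨hθ, hθA⟩ =>
    ⟨not_lt.1 fun hθb => hdisj.notMem_of_mem_left ⟨hθ.1, hθb⟩ hθA, hθ.2⟩
  calc volume (Ioc 0 T ∩ A) = volume (Ioc a (a + T) ∩ A) := by
        simpa using volume_Ioc_inter_eq_of_periodic hA hper 0 a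
    _ ≤ volume (Icc b (a + T)) := measure_mono hsub
    _ = ENNReal.ofReal (T - (b - a)) := by rw [Real.volume_Icc]; ring_nf

theorem neg_lt_sin_of_mem_Ioo {a β : ℝ} (ha : 0 < a) (hβ : β ∈ Ioo (-a) (π + a)) :
    -a < Real.sin β := by
  rcases le_or_gt β 0 with h0 | h0
  · exact hβ.1.trans_le (Real.le_sin h0)
  rcases le_or_gt β π with hπ | hπ
  · linarith [Real.sin_nonneg_of_nonneg_of_le_pi h0.le hπ]
  · have := Real.sin_le (sub_nonneg.2 hπ.le)
    rw [Real.sin_sub_pi] at this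
    linarith [hβ.2]

theorem sin_le_sin_of_mem_Icc {δ β : ℝ} (hδ₀ : 0 ≤ δ) (hδ : δ ≤ π / 2) (hβ : β ∈ Icc δ (π - δ)) :
    Real.sin δ ≤ Real.sin β := by
  rcases le_total β (π / 2) with h | h
  · exact Real.sin_le_sin_of_le_of_le_pi_div_two (by linarith [pi_pos]) h hβ.1
  · rw [← Real.sin_pi_sub β]
    exact Real.sin_le_sin_of_le_of_le_pi_div_two (by linarith [pi_pos]) (by linarith)
      (by linarith [hβ.2])

theorem eventually_mul_lt_nhdsGT_zero (a : ℝ) {b : ℝ} (hb : 0 < b) :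
    ∀ᶠ r in 𝓝[>] (0 : ℝ), a * r < b :=
  nhdsWithin_le_nhds <| (continuous_const_mul a).tendsto' 0 0 (mul_zero a) |>.eventually
    (gt_mem_nhds hb)

theorem exists_pos_eventually_lt_sin_add {c ε : ℝ} {G : ℝ → ℝ} (hc : 0 < c) (hε : 0 < ε)
    (hG : Continuous G) (hGper : Function.Periodic G π) (hG0 : 2 * ε < G 0) :
    ∃ k > 0, ∀ᶠ r in 𝓝[>] 0, ∀ β ∈ Ioo (-(k * r)) (π + k * r),
      ε * r < c * Real.sin β + r * G β := by
  obtain ⟨δ₀, hδ₀, hnear⟩ := Metric.eventually_nhds_iff.1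
    (hG.continuousAt.eventually (lt_mem_nhds hG0))
  set δ := min δ₀ (π / 2)
  have hδ : 0 < δ := lt_min hδ₀ (by positivity)
  have hnear' : ∀ β, |β| < δ ∨ |β - π| < δ → 2 * ε < G β := by
    rintro β (h | h)
    · exact hnear (by rw [Real.dist_eq, sub_zero]; exact h.trans_le (min_le_left _ _))
    · rw [← hGper.sub_eq]
      exact hnear (by rw [Real.dist_eq, sub_zero]; exact h.trans_le (min_le_left _ _))
  obtain ⟨m, hm⟩ := (hGper.isBounded_of_continuous pi_ne_zero hG).bddBelow
  refine ⟨ε / c, by positivity, ?_⟩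
  have hsinδ : 0 < Real.sin δ := Real.sin_pos_of_pos_of_lt_pi hδ (by
    linarith [min_le_right δ₀ (π / 2), pi_pos])
  filter_upwards [self_mem_nhdsWithin, eventually_mul_lt_nhdsGT_zero (ε / c) hδ,
    eventually_mul_lt_nhdsGT_zero (ε - m) (by positivity : 0 < c * Real.sin δ)] with r (hr : 0 < r) hrδ hrm β hβ
  -- Near `0` and `π` the term `r G β > 2 ε r` beats `c sin β > -ε r`; away from them
  -- `c sin β ≥ c sin δ` beats `r G β`.
  by_cases hclose : |β| < δ ∨ |β - π| < δ
  · have hsin := neg_lt_sin_of_mem_Ioo (by positivity) hβ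
    calc ε * r = c * -(ε / c * r) + r * (2 * ε) := by field_simp; ring
      _ < c * Real.sin β + r * G β :=
        add_lt_add (mul_lt_mul_of_pos_left hsin hc) (mul_lt_mul_of_pos_left (hnear' β hclose) hr)
  · simp only [not_or, not_lt] at hclose
    have hβδ : β ∈ Icc δ (π - δ) := by
      obtain ⟨h1, h2⟩ := hclose
      constructor
      · cases abs_cases β <;> linarith [hβ.1]
      · cases abs_cases (β - π) <;> linarith [hβ.2]
    calc ε * r < c * Real.sin δ + r * m := by linarith
      _ ≤ c * Real.sin β + r * G β := by
        gcongr
        · exact sin_le_sin_of_mem_Icc hδ.le (min_le_right _ _) hβδ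
        · exact hm (mem_range_self β)

theorem circleMap_arg_add (x : ℂ) (r β : ℝ) {v : ℂ} (hv : ‖v‖ = 1) :
    circleMap x r (Complex.arg v + β) = x + r • (v * Complex.exp (β * Complex.I)) := by
  rw [circleMap, Complex.real_smul, Complex.ofReal_add, add_mul, Complex.exp_add,
    ← one_mul (Complex.exp (_ * Complex.I)), ← Complex.ofReal_one, ← hv,
    Complex.norm_mul_exp_arg_mul_I]

theorem ContinuousLinearMap.apply_mul_exp_mul_I {F : Type*} [NormedAddCommGroup F]
    [NormedSpace ℝ F] (L : ℂ →L[ℝ] F) (v : ℂ) (β : ℝ) :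
    L (v * Complex.exp (β * Complex.I)) = Real.cos β • L v + Real.sin β • L (Complex.I * v) := by
  rw [← map_smul, ← map_smul, ← map_add]
  congr 1
  simp only [Complex.exp_mul_I, ← Complex.ofReal_cos, ← Complex.ofReal_sin, Complex.real_smul]
  ring

theorem ContinuousLinearMap.apply_I_mul_ne_zero {F : Type*} [NormedAddCommGroup F]
    [NormedSpace ℝ F] {L : ℂ →L[ℝ] F} (hL : L ≠ 0) {v : ℂ} (hv : v ≠ 0) (hvo : L v = 0) :
    L (Complex.I * v) ≠ 0 := by
  intro hIv
  refine hL (ContinuousLinearMap.ext fun w => ?_)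
  have : w = (w / v).re • v + (w / v).im • (Complex.I * v) := by
    simp only [Complex.real_smul]
    rw [← mul_assoc, ← add_mul, Complex.re_add_im, div_mul_cancel₀ w hv]
  rw [this, map_add, map_smul, map_smul, hvo, hIv, smul_zero, smul_zero, add_zero, zero_apply]

theorem volume_sublevel_circleMap_le {f : ℂ → ℝ} (hf : Continuous f) {x : ℂ} {r α ℓ m : ℝ}
    (hpos : ∀ β ∈ Ioo (-ℓ) (π + ℓ), m < f (circleMap x r (α + β))) :
    volume (Ioc 0 (2 * π) ∩ {θ | f (circleMap x r θ) ≤ m}) ≤ ENNReal.ofReal (π - 2 * ℓ) := by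
  have : Fact (0 < 2 * π) := ⟨two_pi_pos⟩
  have hdisj : Disjoint (Ioo (α - ℓ) (α + π + ℓ)) {θ | f (circleMap x r θ) ≤ m} := by
    refine disjoint_left.2 fun θ hθ hθm => (hpos (θ - α) ?_).not_ge ?_
    · exact ⟨by linarith [hθ.1], by linarith [hθ.2]⟩
    · rwa [add_sub_cancel]
  calc _ ≤ ENNReal.ofReal (2 * π - (α + π + ℓ - (α - ℓ))) :=
        volume_Ioc_inter_le_of_disjoint_Ioo
          (isClosed_le (hf.comp (continuous_circleMap x r)) continuous_const).measurableSet
          (fun θ => by simp only [Function.comp_apply, mem_ofPred_eq, periodic_circleMap x r θ])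
          hdisj
    _ = ENNReal.ofReal (π - 2 * ℓ) := by ring_nf

theorem eventually_volume_sublevel_circle_lt_pi {φ : ℂ → ℝ} {x₀ v : ℂ} (hφ : ContDiff ℝ 2 φ)
    (hv : ‖v‖ = 1) (hvo : fderiv ℝ φ x₀ v = 0) (hc : 0 < fderiv ℝ φ x₀ (Complex.I * v))
    (hq : 0 < fderiv ℝ (fderiv ℝ φ) x₀ v v) :
    ∀ᶠ r in 𝓝[>] 0,
      volume (Ioc 0 (2 * π) ∩ {θ | φ (circleMap x₀ r θ) ≤ φ x₀}) < ENNReal.ofReal π := by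
  set B := fderiv ℝ (fderiv ℝ φ) x₀
  set z : ℝ → ℂ := fun β => v * Complex.exp (β * Complex.I)
  set G : ℝ → ℝ := fun β => B (z β) (z β) / 2
  have hGper : Function.Periodic G π := fun β => by
    have : z (β + π) = -z β := by
      simp only [z, Complex.ofReal_add, add_mul, Complex.exp_add, Complex.exp_pi_mul_I]
      ring
    simp only [G, this, map_neg, neg_apply, neg_neg]
  have hG0 : 2 * (B v v / 8) < G 0 := by
    simp only [G, z, Complex.ofReal_zero, zero_mul, Complex.exp_zero, mul_one]
    linarith
  obtain ⟨k, hk, harc⟩ := exists_pos_eventually_lt_sin_add hc (by positivity) (by fun_prop)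
    hGper hG0
  filter_upwards [self_mem_nhdsWithin, harc,
    hφ.eventually_taylor_two_lower_bound x₀ (by positivity : 0 < B v v / 8)]
    with r (hr : 0 < r) harc htaylor
  have hpos : ∀ β ∈ Ioo (-(k * r)) (π + k * r),
      φ x₀ < φ (circleMap x₀ r (Complex.arg v + β)) := by
    intro β hβ
    have hlow : φ x₀ + r * fderiv ℝ φ x₀ (z β) + r ^ 2 * G β - B v v / 8 * r ^ 2
        ≤ φ (x₀ + r • z β) := by
      convert htaylor (z β) (by simp [z, hv, Complex.norm_exp_ofReal_mul_I]) using 3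
      ring
    have hLz : fderiv ℝ φ x₀ (z β) = fderiv ℝ φ x₀ (Complex.I * v) * Real.sin β := by
      rw [ContinuousLinearMap.apply_mul_exp_mul_I, hvo, smul_zero, zero_add, smul_eq_mul,
        mul_comm]
    have := mul_lt_mul_of_pos_left (harc β hβ) hr
    rw [hLz] at hlow
    rw [circleMap_arg_add x₀ r β hv]
    linarith
  exact (volume_sublevel_circleMap_le hφ.continuous hpos).trans_lt
    ((ENNReal.ofReal_lt_ofReal_iff pi_pos).2 (by linarith [mul_pos hk hr]))

theorem IsCircleMedian.ofReal_pi_le_volume_sublevel {x : ℂ} {r m : ℝ} {u φ : ℂ → ℝ}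
    (hmed : IsCircleMedian x r u m) (hφu : ∀ θ, φ (circleMap x r θ) ≤ u (circleMap x r θ)) :
    ENNReal.ofReal π ≤ volume (Ioc 0 (2 * π) ∩ {θ | φ (circleMap x r θ) ≤ m}) := by
  have hhalf : volume (Ioc (0 : ℝ) (2 * π)) / 2 = ENNReal.ofReal π := by
    rw [Real.volume_Ioc, sub_zero, mul_comm, ENNReal.ofReal_mul pi_pos.le, ENNReal.ofReal_ofNat,
      ENNReal.mul_div_cancel_right two_ne_zero ENNReal.ofNat_ne_top]
  exact hhalf ▸ hmed.2.trans (measure_mono fun θ ⟨hθ, hθm⟩ => ⟨hθ, (hφu θ).trans hθm⟩)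

theorem lmvp_viscosity_supersolution_general (Ω : Set ℂ)
    (u : ℂ → ℝ) (hlmvp : HasLMVP Ω u)
    (x₀ : ℂ) (hx₀ : x₀ ∈ Ω) (φ : ℂ → ℝ) (hφ : ContDiff ℝ 2 φ)
    (htouch : φ x₀ = u x₀) (hbelow : ∀ x ∈ Ω, x ≠ x₀ → φ x < u x)
    (hD : fderiv ℝ φ x₀ ≠ 0)
    (v : ℂ) (hv : ‖v‖ = 1) (hvo : fderiv ℝ φ x₀ v = 0) :
    0 ≤ -(iteratedFDeriv ℝ 2 φ x₀ ![v, v]) := by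
  rw [iteratedFDeriv_two_apply, neg_nonneg]
  by_contra! hq
  obtain ⟨w, hw, hwo, hc, hqw⟩ : ∃ w : ℂ, ‖w‖ = 1 ∧ fderiv ℝ φ x₀ w = 0 ∧
      0 < fderiv ℝ φ x₀ (Complex.I * w) ∧ 0 < fderiv ℝ (fderiv ℝ φ) x₀ w w := by
    rcases (ContinuousLinearMap.apply_I_mul_ne_zero hD (norm_ne_zero_iff.1 (hv ▸ one_ne_zero))
      hvo).lt_or_gt with h | h
    · exact ⟨-v, by rwa [norm_neg], by rw [map_neg, hvo, neg_zero],
        by rwa [mul_neg, map_neg, neg_pos], by simpa using hq⟩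
    · exact ⟨v, hv, hvo, h, by simpa using hq⟩
  obtain ⟨R, -, hR, hmed⟩ := hlmvp
  obtain ⟨r, ⟨hsmall, hrR⟩, hr : 0 < r⟩ :=
    (((eventually_volume_sublevel_circle_lt_pi hφ hw hwo hc hqw).and
      (nhdsWithin_le_nhds (gt_mem_nhds (hR x₀ hx₀).1))).and self_mem_nhdsWithin).exists
  have hφu : ∀ θ, φ (circleMap x₀ r θ) ≤ u (circleMap x₀ r θ) := fun θ =>
    (hbelow _ (ball_infDist_compl_subset (mem_ball.2 ((mem_sphere.1
      (circleMap_mem_sphere x₀ hr.le θ)).trans_lt (hrR.trans_le (hR x₀ hx₀).2))))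
      (circleMap_ne_center hr.ne')).le
  have := (hmed x₀ hx₀ r hr hrR.le).ofReal_pi_le_volume_sublevel hφu
  rw [← htouch] at this
  exact hsmall.not_ge this

theorem lmvp_viscosity_supersolution (Ω : Set ℂ) (hΩ : IsOpen Ω)
    (u : ℂ → ℝ) (hu : ContinuousOn u Ω) (hlmvp : HasLMVP Ω u)
    (x₀ : ℂ) (hx₀ : x₀ ∈ Ω) (φ : ℂ → ℝ) (hφ : ContDiff ℝ 2 φ)
    (htouch : φ x₀ = u x₀) (hbelow : ∀ x ∈ Ω, x ≠ x₀ → φ x < u x)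
    (hD : fderiv ℝ φ x₀ ≠ 0)
    (v : ℂ) (hv : ‖v‖ = 1) (hvo : fderiv ℝ φ x₀ v = 0) :
    0 ≤ -(iteratedFDeriv ℝ 2 φ x₀ ![v, v]) :=
  lmvp_viscosity_supersolution_general Ω u hlmvp x₀ hx₀ φ hφ htouch hbelow hD v hv hvo
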